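/- arXiv:2401.04190 — 5 statements merged into one kernel-verified Lean document; each statement's English description precedes it below -/
import Mathlib

section
/- Let p > 0, let (Ω, 𝒜, P) be a probability space, and let F : Ω → ProbabilityMeasure(ℝ/pℤ) be a measurable random probability measure on the additive circle of circumference p whose distribution is translation invariant (for every x ∈ ℝ/pℤ, the pushforward of F ω under translation by x has the same distribution as F). Then for every Borel set A ⊆ ℝ/pℤ and every t > 0, P({ω : (F ω)(A) > t}) ≤ μ(A)/(p·t), where μ is the Haar (Lebesgue) measure on ℝ/pℤ with total mass p. -/
open MeasureTheory Set
open scoped ENNReal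

/-! Averaging the translates `F ω (A - x)` over `x` against Haar measure gives `μ(A)` for every
`ω`, while translation invariance of the law of `F` makes `E[F (A - x)]` independent of `x`.
By Fubini `p · E[F(A)] = μ(A)`, and Markov's inequality finishes the proof. -/

theorem measurable_measure_prodMk_left_of_measurable {X Y Ω : Type*} [MeasurableSpace X]
    [MeasurableSpace Y] [MeasurableSpace Ω] {F : Ω → Measure X} (hF : Measurable F)
    (hprob : ∀ ω, IsProbabilityMeasure (F ω)) {s : Set (Y × X)} (hs : MeasurableSet s) :
    Measurable fun q : Y × Ω => F q.2 (Prod.mk q.1 ⁻¹' s) := by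
  let κ : ProbabilityTheory.Kernel (Y × Ω) X := ⟨fun q => F q.2, hF.comp measurable_snd⟩
  have : ProbabilityTheory.IsMarkovKernel κ := ⟨fun q => hprob q.2⟩
  exact κ.measurable_kernel_prodMk_left (t := {q | (q.1.1, q.2) ∈ s})
    ((measurable_fst.fst.prodMk measurable_snd) hs)

theorem lintegral_measure_preimage_eq_of_map_map_eq {X Ω : Type*} [MeasurableSpace X]
    [MeasurableSpace Ω] {P : Measure Ω} {F : Ω → Measure X} (hF : Measurable F)
    {g : X → X} (hg : Measurable g)
    (hinv : Measure.map (fun ω => Measure.map g (F ω)) P = Measure.map F P)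
    {s : Set X} (hs : MeasurableSet s) :
    ∫⁻ ω, F ω (g ⁻¹' s) ∂P = ∫⁻ ω, F ω s ∂P :=
  calc ∫⁻ ω, F ω (g ⁻¹' s) ∂P
      = ∫⁻ ω, Measure.map g (F ω) s ∂P := by simp_rw [Measure.map_apply hg hs]
    _ = ∫⁻ ν, ν s ∂(Measure.map (fun ω => Measure.map g (F ω)) P) :=
        (lintegral_map (Measure.measurable_coe hs)
          ((Measure.measurable_map g hg).comp hF)).symm
    _ = ∫⁻ ν, ν s ∂(Measure.map F P) := by rw [hinv]
    _ = ∫⁻ ω, F ω s ∂P := lintegral_map (Measure.measurable_coe hs) hF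

section AddGroup

variable {G : Type*} [MeasurableSpace G] [AddGroup G] [MeasurableAdd₂ G]

theorem lintegral_measure_preimage_add_right (μ ν : Measure G) [SFinite μ] [SFinite ν]
    [μ.IsAddLeftInvariant] {s : Set G} (hs : MeasurableSet s) :
    ∫⁻ x, ν ((· + x) ⁻¹' s) ∂μ = μ s * ν univ := by
  have hind : ∀ x, ν ((· + x) ⁻¹' s) = ∫⁻ y, s.indicator 1 (y + x) ∂ν := fun x => by
    rw [← lintegral_indicator_one (measurable_add_const x hs)]
    rfl
  simp_rw [hind]
  rw [lintegral_lintegral_swap (f := fun x y => s.indicator 1 (y + x))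
    ((measurable_one.indicator hs).comp (measurable_snd.add measurable_fst)).aemeasurable]
  simp_rw [lintegral_add_left_eq_self (s.indicator 1), lintegral_indicator_one hs,
    lintegral_const]

theorem measure_univ_mul_lintegral_eq_of_map_add_right_eq (μ : Measure G) [SFinite μ]
    [μ.IsAddLeftInvariant] {Ω : Type*} [MeasurableSpace Ω] (P : Measure Ω)
    [IsProbabilityMeasure P] {F : Ω → Measure G} (hprob : ∀ ω, IsProbabilityMeasure (F ω))
    (hF : Measurable F)
    (hinv : ∀ x : G, Measure.map (fun ω => Measure.map (· + x) (F ω)) P = Measure.map F P)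
    {s : Set G} (hs : MeasurableSet s) :
    μ univ * ∫⁻ ω, F ω s ∂P = μ s := by
  have hjoint : Measurable fun q : G × Ω => F q.2 ((· + q.1) ⁻¹' s) :=
    measurable_measure_prodMk_left_of_measurable hF hprob
      (s := {q : G × G | q.2 + q.1 ∈ s}) ((measurable_snd.add measurable_fst) hs)
  calc μ univ * ∫⁻ ω, F ω s ∂P
      = ∫⁻ x, ∫⁻ ω, F ω ((· + x) ⁻¹' s) ∂P ∂μ := by
        simp_rw [lintegral_measure_preimage_eq_of_map_map_eq hF (measurable_add_const _)
          (hinv _) hs, lintegral_const, mul_comm]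
    _ = ∫⁻ ω, ∫⁻ x, F ω ((· + x) ⁻¹' s) ∂μ ∂P :=
        lintegral_lintegral_swap (f := fun x ω => F ω ((· + x) ⁻¹' s)) hjoint.aemeasurable
    _ = μ s := by
        simp only [lintegral_measure_preimage_add_right μ _ hs, measure_univ, mul_one,
          lintegral_const]

end AddGroup

/-- Let `p > 0` and let `F` be a measurable random probability
measure on the additive circle `ℝ/pℤ` whose distribution is translation
invariant. Then for every Borel set `A` and every `t > 0`,
`P {ω : (F ω)(A) > t} ≤ μ(A) / (p·t)`, where `μ` is the Haar (Lebesgue)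
measure of total mass `p` (Markov's inequality bound of Section 5.3). -/
theorem markov_bound_translation_invariant_random_measure
    (p : ℝ) [Fact (0 < p)]
    {Ω : Type*} [MeasurableSpace Ω] (P : Measure Ω) [IsProbabilityMeasure P]
    (F : Ω → Measure (AddCircle p))
    (hFprob : ∀ ω, IsProbabilityMeasure (F ω))
    (hFmeas : Measurable F)
    (hinv : ∀ x : AddCircle p,
      Measure.map (fun ω => Measure.map (fun y => y + x) (F ω)) P = Measure.map F P) :
    ∀ A : Set (AddCircle p), MeasurableSet A → ∀ t : ℝ, 0 < t →
      P {ω | ENNReal.ofReal t < F ω A} ≤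
        volume A / (ENNReal.ofReal p * ENNReal.ofReal t) := by
  intro A hA t ht
  have hp0 : ENNReal.ofReal p ≠ 0 := ENNReal.ofReal_ne_zero_iff.mpr Fact.out
  have hexpectation : ∫⁻ ω, F ω A ∂P = volume A / ENNReal.ofReal p := by
    rw [ENNReal.eq_div_iff hp0 ENNReal.ofReal_ne_top, ← AddCircle.measure_univ]
    exact measure_univ_mul_lintegral_eq_of_map_add_right_eq volume P hFprob hFmeas hinv hA
  calc P {ω | ENNReal.ofReal t < F ω A}
      ≤ P {ω | ENNReal.ofReal t ≤ F ω A} :=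
        measure_mono <| ofPred_subset_ofPred.mpr fun _ => le_of_lt
    _ ≤ (∫⁻ ω, F ω A ∂P) / ENNReal.ofReal t :=
        meas_ge_le_lintegral_div ((Measure.measurable_coe hA).comp hFmeas).aemeasurable
          (ENNReal.ofReal_ne_zero_iff.mpr ht) ENNReal.ofReal_ne_top
    _ = volume A / (ENNReal.ofReal p * ENNReal.ofReal t) := by
        rw [hexpectation, div_eq_mul_inv, div_eq_mul_inv, div_eq_mul_inv, mul_assoc,
          ← ENNReal.mul_inv (Or.inl hp0) (Or.inl ENNReal.ofReal_ne_top)]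
end

section
/- Let 0 < a < b. The function g(θ) = exp(−a/θ) − exp(−b/θ) on θ ∈ (0,∞) attains its supremum at the unique maximizer θ* = (b − a)/log(b/a). -/
/-!
Substituting `t = 1/θ` turns `g` into `f t = exp (-a t) - exp (-b t)`, with
`f' t = b exp (-b t) - a exp (-a t)`. Comparing logarithms, `f' t > 0` exactly when
`t < log (b/a) / (b - a)` and `f' t < 0` beyond it, so `f` strictly increases up to this point
and strictly decreases after it; it is therefore the unique maximizer of `f` on all of `ℝ`,
and its reciprocal `(b - a) / log (b/a)` is the unique maximizer of `g`.
-/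

open Real Set

theorem apply_lt_apply_of_hasDerivAt_pos_of_neg {f f' : ℝ → ℝ} {c t : ℝ}
    (hf : ∀ x, HasDerivAt f (f' x) x) (hpos : ∀ x < c, 0 < f' x) (hneg : ∀ x > c, f' x < 0)
    (ht : t ≠ c) : f t < f c := by
  have hcont (s : Set ℝ) : ContinuousOn f s :=
    (continuous_iff_continuousAt.2 fun x => (hf x).continuousAt).continuousOn
  rcases ht.lt_or_gt with h | h
  · exact strictMonoOn_of_hasDerivWithinAt_pos (convex_Iic c) (hcont _)
      (fun x _ => (hf x).hasDerivWithinAt) (fun x hx => hpos x (by rwa [interior_Iic] at hx))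
      h.le self_mem_Iic h
  · exact strictAntiOn_of_hasDerivWithinAt_neg (convex_Ici c) (hcont _)
      (fun x _ => (hf x).hasDerivWithinAt) (fun x hx => hneg x (by rwa [interior_Ici] at hx))
      self_mem_Ici h.le h

theorem mul_exp_lt_mul_exp_iff {a b x y : ℝ} (ha : 0 < a) (hb : 0 < b) :
    a * exp x < b * exp y ↔ log a + x < log b + y := by
  rw [← exp_lt_exp (x := log a + x), exp_add, exp_add, exp_log ha, exp_log hb]

theorem hasDerivAt_exp_neg_mul_sub_exp_neg_mul (a b t : ℝ) :
    HasDerivAt (fun t => exp (-a * t) - exp (-b * t)) (b * exp (-b * t) - a * exp (-a * t)) t := by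
  have hexp (c : ℝ) : HasDerivAt (fun t => exp (-c * t)) (exp (-c * t) * -c) t :=
    ((hasDerivAt_id t).const_mul (-c)).exp.congr_deriv (by simp)
  exact ((hexp a).sub (hexp b)).congr_deriv (by ring)

theorem exp_neg_mul_sub_exp_neg_mul_lt {a b t : ℝ} (ha : 0 < a) (hab : a < b)
    (ht : t ≠ log (b / a) / (b - a)) :
    exp (-a * t) - exp (-b * t) <
      exp (-a * (log (b / a) / (b - a))) - exp (-b * (log (b / a) / (b - a))) := by
  have hb : 0 < b := ha.trans hab
  have hlog : log (b / a) = log b - log a := log_div hb.ne' ha.ne'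
  have hba : 0 < b - a := sub_pos.2 hab
  refine apply_lt_apply_of_hasDerivAt_pos_of_neg
    (hasDerivAt_exp_neg_mul_sub_exp_neg_mul a b) (fun x hx => ?_) (fun x hx => ?_) ht
  · rw [lt_div_iff₀ hba, hlog] at hx
    rw [sub_pos, mul_exp_lt_mul_exp_iff ha hb]
    linarith
  · rw [gt_iff_lt, div_lt_iff₀ hba, hlog] at hx
    rw [sub_neg, mul_exp_lt_mul_exp_iff hb ha]
    linarith

theorem exp_neg_div_sub_exp_neg_div_lt {a b θ : ℝ} (ha : 0 < a) (hab : a < b)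
    (hθ : θ ≠ (b - a) / log (b / a)) :
    exp (-a / θ) - exp (-b / θ) <
      exp (-a / ((b - a) / log (b / a))) - exp (-b / ((b - a) / log (b / a))) := by
  simp only [div_eq_mul_inv (-a), div_eq_mul_inv (-b)]
  rw [inv_div]
  exact exp_neg_mul_sub_exp_neg_mul_lt ha hab (by rwa [← inv_div, ne_eq, inv_inj])

/-- For `0 < a < b`, the function
`g(θ) = exp(-a/θ) - exp(-b/θ)` on `(0,∞)` attains its supremum at the unique
maximizer `θ* = (b-a)/log(b/a)`. -/
theorem exp_interval_prob_unique_maximizer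
    (a b : ℝ) (ha : 0 < a) (hab : a < b) :
    0 < (b - a) / Real.log (b / a) ∧
    (∀ θ ∈ Ioi (0:ℝ),
      Real.exp (-a / θ) - Real.exp (-b / θ) ≤
        Real.exp (-a / ((b - a) / Real.log (b / a))) -
          Real.exp (-b / ((b - a) / Real.log (b / a)))) ∧
    (∀ θ ∈ Ioi (0:ℝ),
      Real.exp (-a / θ) - Real.exp (-b / θ) =
        Real.exp (-a / ((b - a) / Real.log (b / a))) -
          Real.exp (-b / ((b - a) / Real.log (b / a))) →
      θ = (b - a) / Real.log (b / a)) := by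
  refine ⟨div_pos (sub_pos.2 hab) (log_pos ((one_lt_div ha).2 hab)), fun θ _ => ?_,
    fun θ _ heq => ?_⟩
  · rcases eq_or_ne θ ((b - a) / log (b / a)) with rfl | hθ
    · exact le_rfl
    · exact (exp_neg_div_sub_exp_neg_div_lt ha hab hθ).le
  · by_contra hθ
    exact (exp_neg_div_sub_exp_neg_div_lt ha hab hθ).ne heq
end

section
/- Let 0 < a < b. Then sup over θ ∈ (0,∞) of (exp(−a/θ) − exp(−b/θ)) equals (b/a)^{−a/(b−a)} − (b/a)^{−b/(b−a)}. -/
open Real Set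

/-!
Put `w = a / b ∈ (0, 1)`. As `θ` runs over `(0, ∞)`, `y = exp (-b / θ)` runs over `(0, 1)` and
`exp (-a / θ) - exp (-b / θ) = y ^ w - y`. The tangent line of the concave function `y ↦ y ^ w`
at `y₀ = w ^ (1 / (1 - w))` has slope `1` (Bernoulli's inequality), so `y ^ w - y` is maximal at
`y₀ ∈ (0, 1)`, with value `w ^ (w / (1 - w)) - w ^ (1 / (1 - w))`, which is the right-hand side.
-/

theorem Real.rpow_sub_self_le {w y : ℝ} (hw0 : 0 < w) (hw1 : w < 1) (hy : 0 ≤ y) :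
    y ^ w - y ≤ w ^ (w / (1 - w)) - w ^ (1 / (1 - w)) := by
  set y₀ := w ^ (1 / (1 - w)) with hy₀
  have hy₀_pos : 0 < y₀ := by positivity
  have hy₀_pow : y₀ ^ w = w ^ (w / (1 - w)) := by
    rw [hy₀, ← rpow_mul hw0.le, one_div_mul_eq_div]
  have hslope : w * y₀ ^ (w - 1) = 1 := by
    have h : w - 1 = -(1 - w) := by ring
    rw [hy₀, ← rpow_mul hw0.le, h, mul_neg, one_div_mul_cancel (by linarith), rpow_neg_one,
      mul_inv_cancel₀ hw0.ne']
  have htangent : (1 + (y / y₀ - 1)) ^ w ≤ 1 + w * (y / y₀ - 1) :=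
    rpow_one_add_le_one_add_mul_self (by have := div_nonneg hy hy₀_pos.le; linarith) hw0.le hw1.le
  calc y ^ w - y = y₀ ^ w * (1 + (y / y₀ - 1)) ^ w - y := by
        rw [add_sub_cancel, div_rpow hy hy₀_pos.le, mul_div_cancel₀ _ (by positivity)]
    _ ≤ y₀ ^ w * (1 + w * (y / y₀ - 1)) - y := by gcongr
    _ = y₀ ^ w - y₀ + (w * y₀ ^ (w - 1) - 1) * (y - y₀) := by
        rw [rpow_sub_one hy₀_pos.ne']
        field_simp
        ring
    _ = w ^ (w / (1 - w)) - y₀ := by rw [hslope, hy₀_pow]; ring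

theorem Real.exists_rpow_sub_self_eq {w : ℝ} (hw0 : 0 < w) (hw1 : w < 1) :
    ∃ y₀ ∈ Ioo 0 1, y₀ ^ w - y₀ = w ^ (w / (1 - w)) - w ^ (1 / (1 - w)) :=
  ⟨w ^ (1 / (1 - w)), ⟨by positivity, rpow_lt_one hw0.le hw1 (by simpa using hw1)⟩,
    by rw [← rpow_mul hw0.le, one_div_mul_eq_div]⟩

theorem Real.exp_neg_div_sub_exp_neg_div_eq {a b θ : ℝ} (hb : b ≠ 0) :
    exp (-a / θ) - exp (-b / θ) = exp (-b / θ) ^ (a / b) - exp (-b / θ) := by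
  rw [← exp_mul]
  congr 2
  field_simp

theorem Real.div_rpow_neg_sub_div_rpow_neg {a b : ℝ} (ha : 0 < a) (hab : a < b) :
    (b / a) ^ (-a / (b - a)) - (b / a) ^ (-b / (b - a)) =
      (a / b) ^ (a / b / (1 - a / b)) - (a / b) ^ (1 / (1 - a / b)) := by
  have hb : 0 < b := ha.trans hab
  have hba : b - a ≠ 0 := by linarith
  have h₁ : a / b / (1 - a / b) = a / (b - a) := by field_simp
  have h₂ : 1 / (1 - a / b) = b / (b - a) := by field_simp
  rw [h₁, h₂, neg_div, neg_div, rpow_neg (by positivity), rpow_neg (by positivity),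
    ← inv_rpow (by positivity), ← inv_rpow (by positivity), inv_div]

/-- For `0 < a < b`, the supremum over `θ ∈ (0,∞)` of
`exp(-a/θ) - exp(-b/θ)` equals `(b/a)^(-a/(b-a)) - (b/a)^(-b/(b-a))`
(the maximum tuning probability of the life-permitting interval `[a,b]`
over the family of exponential priors). -/
theorem exp_interval_prob_sup
    (a b : ℝ) (ha : 0 < a) (hab : a < b) :
    (⨆ θ : Ioi (0:ℝ), (Real.exp (-a / θ) - Real.exp (-b / θ))) =
      (b / a) ^ (-a / (b - a)) - (b / a) ^ (-b / (b - a)) := by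
  have hb : 0 < b := ha.trans hab
  have hw0 : 0 < a / b := div_pos ha hb
  have hw1 : a / b < 1 := (div_lt_one hb).2 hab
  obtain ⟨y₀, ⟨hy₀0, hy₀1⟩, hy₀_max⟩ := exists_rpow_sub_self_eq hw0 hw1
  have hθ₀ : 0 < -b / log y₀ := div_pos_of_neg_of_neg (by linarith) (log_neg hy₀0 hy₀1)
  have hattain : exp (-b / (-b / log y₀)) = y₀ := by
    rw [div_div_cancel₀ (by linarith), exp_log hy₀0]
  rw [div_rpow_neg_sub_div_rpow_neg ha hab]
  refine IsLUB.ciSup_eq (IsGreatest.isLUB ⟨⟨⟨-b / log y₀, hθ₀⟩, ?_⟩, ?_⟩)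
  · exact (exp_neg_div_sub_exp_neg_div_eq hb.ne').trans (by rw [hattain, hy₀_max])
  · rintro _ ⟨θ, rfl⟩
    exact (exp_neg_div_sub_exp_neg_div_eq hb.ne').trans_le
      (rpow_sub_self_le hw0 hw1 (exp_pos _).le)
end

section
/- The function h : (1,∞) → ℝ defined by h(r) = r^{−1/(r−1)} − r^{−r/(r−1)} is strictly increasing on (1,∞), and 0 < h(r) < 1 for all r > 1. -/
open Real Set

private lemma hfact (r : ℝ) (hr : 1 < r) :
    r ^ (-1 / (r - 1)) - r ^ (-r / (r - 1)) =
      Real.exp (-(Real.log r / (r - 1))) * (1 - r⁻¹) := by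
  have hr0 : (0 : ℝ) < r := by linarith
  have hs : r - 1 ≠ 0 := by intro h; nlinarith
  rw [Real.rpow_def_of_pos hr0, Real.rpow_def_of_pos hr0]
  have h2 : Real.log r * (-r / (r - 1)) =
      Real.log r * (-1 / (r - 1)) + (-Real.log r) := by field_simp; ring
  rw [h2, Real.exp_add, Real.exp_neg, Real.exp_log hr0]
  have h3 : Real.log r * (-1 / (r - 1)) = -(Real.log r / (r - 1)) := by
    field_simp
  rw [h3]; ring

private lemma f_anti : StrictAntiOn (fun x : ℝ => Real.log x / (x - 1)) (Ioi 1) := by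
  have hconv : Convex ℝ (Ioi (1 : ℝ)) := convex_Ioi 1
  have hd : ∀ x ∈ interior (Ioi (1 : ℝ)),
      HasDerivAt (fun x : ℝ => Real.log x / (x - 1))
        ((x⁻¹ * (x - 1) - Real.log x * 1) / (x - 1) ^ 2) x := by
    intro x hx
    rw [interior_Ioi] at hx
    have hx1 : (1 : ℝ) < x := hx
    have hx0 : (0 : ℝ) < x := by linarith
    have hs : x - 1 ≠ 0 := by intro h; nlinarith
    exact (Real.hasDerivAt_log hx0.ne').div ((hasDerivAt_id x).sub_const 1) hs
  refine strictAntiOn_of_deriv_neg hconv ?_ ?_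
  · apply ContinuousOn.div
    · exact fun x hx => (Real.continuousAt_log (by rw [mem_Ioi] at hx; positivity)).continuousWithinAt
    · exact (continuous_id.sub continuous_const).continuousOn
    · intro x hx; rw [mem_Ioi] at hx; intro h; nlinarith
  · intro x hx
    rw [(hd x hx).deriv]
    rw [interior_Ioi, mem_Ioi] at hx
    have hx0 : (0 : ℝ) < x := by linarith
    have hlog : 1 - x⁻¹ < Real.log x := by
      have := Real.log_lt_sub_one_of_pos (x := x⁻¹) (by positivity)
        (by intro h; apply absurd (inv_eq_one.mp h); linarith)
      rw [Real.log_inv] at this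
      linarith
    have hnum : x⁻¹ * (x - 1) - Real.log x * 1 < 0 := by
      have : x⁻¹ * (x - 1) = 1 - x⁻¹ := by field_simp
      rw [this]; linarith
    have hden : (0 : ℝ) < (x - 1) ^ 2 := by nlinarith
    exact div_neg_of_neg_of_pos hnum hden

/-- The function `h(r) = r^(-1/(r-1)) - r^(-r/(r-1))` is
strictly increasing on `(1,∞)` and satisfies `0 < h(r) < 1` for all `r > 1`. -/
theorem h_strictMonoOn_and_mem_unit_interval :
    StrictMonoOn (fun r : ℝ => r ^ (-1 / (r - 1)) - r ^ (-r / (r - 1))) (Ioi 1) ∧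
    ∀ r : ℝ, 1 < r →
      0 < r ^ (-1 / (r - 1)) - r ^ (-r / (r - 1)) ∧
      r ^ (-1 / (r - 1)) - r ^ (-r / (r - 1)) < 1 := by
  constructor
  · intro a ha b hb hab
    rw [mem_Ioi] at ha hb
    simp only
    rw [hfact a ha, hfact b hb]
    have h1 : Real.exp (-(Real.log a / (a - 1))) < Real.exp (-(Real.log b / (b - 1))) := by
      apply Real.exp_lt_exp.mpr
      have := f_anti (mem_Ioi.mpr ha) (mem_Ioi.mpr hb) hab
      simpa using this
    have h2 : 1 - a⁻¹ < 1 - b⁻¹ := by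
      have : b⁻¹ < a⁻¹ := by
        apply inv_strictAnti₀ (by linarith) hab
      linarith
    have h3 : (0 : ℝ) < 1 - a⁻¹ := by
      have : a⁻¹ < 1 := by rw [inv_lt_one_iff₀]; right; exact ha
      linarith
    exact mul_lt_mul'' h1 h2 (Real.exp_pos _).le h3.le
  · intro r hr
    rw [hfact r hr]
    have hf : (0 : ℝ) < Real.log r / (r - 1) := by
      apply div_pos (Real.log_pos hr) (by linarith)
    have he1 : Real.exp (-(Real.log r / (r - 1))) < 1 := by
      rw [Real.exp_lt_one_iff]; linarith
    have h3 : (0 : ℝ) < 1 - r⁻¹ := by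
      have : r⁻¹ < 1 := by rw [inv_lt_one_iff₀]; right; exact hr
      linarith
    constructor
    · positivity
    · calc Real.exp (-(Real.log r / (r - 1))) * (1 - r⁻¹)
          < 1 * (1 - r⁻¹) := by
            exact mul_lt_mul_of_pos_right he1 h3
        _ ≤ 1 := by
            have : (0:ℝ) < r⁻¹ := by positivity
            linarith
end

section
/- Let x₀ > 0 and for 0 < ε < 1 consider the interval ℓ = [x₀(1−ε), x₀(1+ε)]. Define TP_max(ε) = sup over θ > 0 of (exp(−x₀(1−ε)/θ) − exp(−x₀(1+ε)/θ)). Then lim_{ε→0⁺} TP_max(ε)/ε = 2e^{−1}; in particular TP_max(ε) = 2e^{−1}ε + o(ε) as ε → 0⁺. -/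
open Real Set Filter Topology

/-
The prior with mean θ gives the interval [a, b] the mass exp(-a/θ) - exp(-b/θ). Convexity of exp
bounds this by ((b - a)/θ) exp(-a/θ) = ((b - a)/a) · u e^{-u} with u = a/θ, and u e^{-u} ≤ e^{-1};
for a = x₀(1-ε), b = x₀(1+ε) this gives TP_max(ε) ≤ 2ε e^{-1}/(1-ε). Conversely the prior with
θ = x₀ already gives e^{-1}(e^ε - e^{-ε}) = 2e^{-1} sinh ε, and sinh ε / ε → 1.
-/

lemma exp_neg_div_sub_exp_neg_div_le {a b : ℝ} (ha : 0 < a) (hab : a ≤ b) (θ : ℝ) :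
    exp (-a / θ) - exp (-b / θ) ≤ (b - a) / a * exp (-1) := by
  have hsplit : exp (-b / θ) = exp (-a / θ) * exp (-((b - a) / θ)) := by
    rw [← exp_add]; congr 1; ring
  have hlin : exp (-a / θ) - exp (-b / θ) ≤ (b - a) / θ * exp (-a / θ) := by
    nlinarith [add_one_le_exp (-((b - a) / θ)), exp_pos (-a / θ)]
  calc exp (-a / θ) - exp (-b / θ) ≤ (b - a) / θ * exp (-a / θ) := hlin
    _ = (b - a) / a * (a / θ * exp (-(a / θ))) := by
      rw [neg_div, ← mul_assoc, div_mul_div_cancel₀ ha.ne']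
    _ ≤ (b - a) / a * exp (-1) :=
      mul_le_mul_of_nonneg_left (mul_exp_neg_le_exp_neg_one _) (div_nonneg (by linarith) ha.le)

lemma ciSup_exp_neg_div_sub_exp_neg_div_le {a b : ℝ} (ha : 0 < a) (hab : a ≤ b) :
    ⨆ θ : Ioi (0:ℝ), (exp (-a / θ) - exp (-b / θ)) ≤ (b - a) / a * exp (-1) :=
  ciSup_le fun θ => exp_neg_div_sub_exp_neg_div_le ha hab θ

lemma exp_neg_div_sub_exp_neg_div_le_ciSup {a b : ℝ} (ha : 0 < a) (hab : a ≤ b)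
    (θ : Ioi (0:ℝ)) :
    exp (-a / θ) - exp (-b / θ) ≤ ⨆ θ : Ioi (0:ℝ), (exp (-a / θ) - exp (-b / θ)) :=
  le_ciSup (f := fun θ : Ioi (0:ℝ) => exp (-a / θ) - exp (-b / θ))
    ⟨_, forall_mem_range.2 fun θ => exp_neg_div_sub_exp_neg_div_le ha hab θ⟩ θ

lemma tendsto_sinh_div_self : Tendsto (fun t => sinh t / t) (𝓝[≠] 0) (𝓝 1) := by
  simpa [div_eq_inv_mul] using (hasDerivAt_sinh 0).tendsto_slope_zero

/-- Let `x₀ > 0` and, for `0 < ε < 1`, let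
`TP_max(ε) = sup_{θ>0} (exp(-x₀(1-ε)/θ) - exp(-x₀(1+ε)/θ))` be the maximum
tuning probability of the life-permitting interval `[x₀(1-ε), x₀(1+ε)]` over
the exponential priors. Then `lim_{ε→0⁺} TP_max(ε)/ε = 2e⁻¹`, i.e.
`TP_max(ε) = 2e⁻¹ ε + o(ε)` as `ε → 0⁺`. -/
theorem TPmax_asymptotics (x₀ : ℝ) (hx₀ : 0 < x₀) :
    Tendsto
      (fun ε : ℝ =>
        (⨆ θ : Ioi (0:ℝ),
          (Real.exp (-(x₀ * (1 - ε)) / θ) - Real.exp (-(x₀ * (1 + ε)) / θ))) / ε)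
      (nhdsWithin 0 (Ioi 0)) (nhds (2 * Real.exp (-1))) := by
  have hlower : Tendsto (fun ε => 2 * exp (-1) * (sinh ε / ε)) (𝓝[>] 0) (𝓝 (2 * exp (-1))) := by
    simpa using (tendsto_sinh_div_self.mono_left (nhdsGT_le_nhdsNE 0)).const_mul (2 * exp (-1))
  have hupper : Tendsto (fun ε => 2 * exp (-1) / (1 - ε)) (𝓝[>] 0) (𝓝 (2 * exp (-1))) := by
    have hcont : ContinuousAt (fun ε : ℝ => 2 * exp (-1) / (1 - ε)) 0 :=
      continuousAt_const.div (by fun_prop) (by norm_num)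
    simpa using hcont.tendsto.mono_left nhdsWithin_le_nhds
  refine tendsto_of_tendsto_of_tendsto_of_le_of_le' hlower hupper ?_ ?_ <;>
    filter_upwards [Ioo_mem_nhdsGT one_pos] with ε ⟨hε0, hε1⟩
  all_goals
    have ha : 0 < x₀ * (1 - ε) := mul_pos hx₀ (by linarith)
    have hab : x₀ * (1 - ε) ≤ x₀ * (1 + ε) := by nlinarith
  · rw [le_div_iff₀ hε0]
    calc 2 * exp (-1) * (sinh ε / ε) * ε
        = exp (-(x₀ * (1 - ε)) / x₀) - exp (-(x₀ * (1 + ε)) / x₀) := by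
          rw [sinh_eq]; field_simp
          rw [mul_sub, ← exp_add, ← exp_add]; ring_nf
      _ ≤ _ := exp_neg_div_sub_exp_neg_div_le_ciSup ha hab ⟨x₀, hx₀⟩
  · rw [div_le_iff₀ hε0]
    calc _ ≤ (x₀ * (1 + ε) - x₀ * (1 - ε)) / (x₀ * (1 - ε)) * exp (-1) :=
          ciSup_exp_neg_div_sub_exp_neg_div_le ha hab
      _ = 2 * exp (-1) / (1 - ε) * ε := by
          field_simp; ring
end
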